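/- arXiv:2411.01476 — 3 statements merged into one kernel-verified Lean document; each statement's English description precedes it below -/
import Mathlib

section
/- Assume condition (1.4): 𝒦 a^E < 1. Then w_a(r_0) > 0, and w_a has exactly two zeros 0 < R_0 < R_1 < ∞ in (0,∞), which satisfy R_0 < r_0 < R_1; moreover w_a(r) < 0 for r ∈ (0,R_0), w_a(r) > 0 for r ∈ (R_0,R_1), and w_a(r) < 0 for r ∈ (R_1,∞). -/
open Filter Set Topology

noncomputable section

/-- `γ_t = (Nt − N − α)/(2ts)`. -/
def gam (N : ℕ) (s α t : ℝ) : ℝ := ((N : ℝ) * t - N - α) / (2 * t * s)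

def auxF (A B u v : ℝ) : ℝ → ℝ := fun r => A * r ^ u + B * r ^ v

lemma stmt3_key (A B c lam mu : ℝ) (hA : 0 < A) (hB : 0 < B) (hc : 0 < c)
    (hlm : lam + mu = 1) :
    A * (c * (A / B)) ^ (-lam) + B * (c * (A / B)) ^ mu
      = (1 + 1/c) * c ^ mu * (A ^ mu * B ^ lam) := by
  have hAB : 0 < A / B := div_pos hA hB
  have e1 : -lam = mu - 1 := by linarith
  have e2 : lam = 1 - mu := by linarith
  rw [e1, e2, Real.mul_rpow hc.le hAB.le, Real.mul_rpow hc.le hAB.le,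
    Real.rpow_sub hc, Real.rpow_sub hAB, Real.rpow_sub hB, Real.rpow_one,
    Real.rpow_one, Real.rpow_one, Real.div_rpow hA.le hB.le]
  have h1 : A ^ mu ≠ 0 := by positivity
  have h2 : B ^ mu ≠ 0 := by positivity
  have h3 : c ^ mu ≠ 0 := by positivity
  field_simp
  ring

lemma auxF_hasDerivAt (A B u v r : ℝ) (hr : r ≠ 0) :
    HasDerivAt (auxF A B u v) (A * (u * r ^ (u-1)) + B * (v * r ^ (v-1))) r := by
  exact ((Real.hasDerivAt_rpow_const (Or.inl hr)).const_mul A).add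
    ((Real.hasDerivAt_rpow_const (Or.inl hr)).const_mul B)

lemma auxF_deriv_neg (A B u v r0 r : ℝ) (hA : 0 < A) (hB : 0 < B) (hu : u < 0) (hv : 0 < v)
    (hr0 : r0 ^ (v - u) = (-u) * A / (v * B)) (hr : 0 < r) (hrr0 : r < r0) :
    A * (u * r ^ (u-1)) + B * (v * r ^ (v-1)) < 0 := by
  have hd : (0:ℝ) < v - u := by linarith
  have h1 : r ^ (v-u) < (-u) * A / (v * B) := hr0 ▸ Real.rpow_lt_rpow hr.le hrr0 hd
  have h2 : r ^ (v-u) * r ^ (u-1) = r ^ (v-1) := by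
    rw [← Real.rpow_add hr]; congr 1; ring
  have h3 : (0:ℝ) < r ^ (u-1) := Real.rpow_pos_of_pos hr _
  have h4 : r ^ (v-u) * (v * B) < (-u) * A := (lt_div_iff₀ (by positivity)).mp h1
  have h5 : r ^ (v-u) * (v * B) * r ^ (u-1) < (-u) * A * r ^ (u-1) :=
    mul_lt_mul_of_pos_right h4 h3
  have h6 : v * B * r ^ (v-1) < (-u) * A * r ^ (u-1) := by
    calc v * B * r ^ (v-1) = r ^ (v-u) * (v * B) * r ^ (u-1) := by rw [← h2]; ring
    _ < (-u) * A * r ^ (u-1) := h5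
  nlinarith [h6]

lemma auxF_deriv_pos (A B u v r0 r : ℝ) (hA : 0 < A) (hB : 0 < B) (hu : u < 0) (hv : 0 < v)
    (hr0 : r0 ^ (v - u) = (-u) * A / (v * B)) (hr0pos : 0 < r0) (hrr0 : r0 < r) :
    0 < A * (u * r ^ (u-1)) + B * (v * r ^ (v-1)) := by
  have hd : (0:ℝ) < v - u := by linarith
  have hr : 0 < r := hr0pos.trans hrr0
  have h1 : (-u) * A / (v * B) < r ^ (v-u) := hr0 ▸ Real.rpow_lt_rpow hr0pos.le hrr0 hd
  have h2 : r ^ (v-u) * r ^ (u-1) = r ^ (v-1) := by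
    rw [← Real.rpow_add hr]; congr 1; ring
  have h3 : (0:ℝ) < r ^ (u-1) := Real.rpow_pos_of_pos hr _
  have h4 : (-u) * A < r ^ (v-u) * (v * B) := (div_lt_iff₀ (by positivity)).mp h1
  have h5 : (-u) * A * r ^ (u-1) < r ^ (v-u) * (v * B) * r ^ (u-1) :=
    mul_lt_mul_of_pos_right h4 h3
  have h6 : (-u) * A * r ^ (u-1) < v * B * r ^ (v-1) := by
    calc (-u) * A * r ^ (u-1) < r ^ (v-u) * (v * B) * r ^ (u-1) := h5
    _ = v * B * r ^ (v-1) := by rw [← h2]; ring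
  nlinarith [h6]

lemma auxMain (A B u v r0 : ℝ) (hA : 0 < A) (hB : 0 < B) (hu : u < 0) (hv : 0 < v)
    (hr0pos : 0 < r0) (hr0 : r0 ^ (v - u) = (-u) * A / (v * B))
    (hFr0 : auxF A B u v r0 < 1) :
    ∃ R0 R1 : ℝ, 0 < R0 ∧ R0 < r0 ∧ r0 < R1 ∧ auxF A B u v R0 = 1 ∧ auxF A B u v R1 = 1 ∧
      (∀ r : ℝ, 0 < r → auxF A B u v r = 1 → r = R0 ∨ r = R1) ∧
      (∀ r : ℝ, 0 < r → r < R0 → 1 < auxF A B u v r) ∧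
      (∀ r : ℝ, R0 < r → r < R1 → auxF A B u v r < 1) ∧
      (∀ r : ℝ, R1 < r → 1 < auxF A B u v r) := by
  have hcont : ∀ r : ℝ, 0 < r → ContinuousAt (auxF A B u v) r := fun r hr =>
    (auxF_hasDerivAt A B u v r hr.ne').continuousAt
  have hanti : StrictAntiOn (auxF A B u v) (Ioc 0 r0) := by
    apply strictAntiOn_of_deriv_neg (convex_Ioc 0 r0)
      (fun r hr => (hcont r hr.1).continuousWithinAt)
    intro r hr
    rw [interior_Ioc] at hr
    rw [(auxF_hasDerivAt A B u v r hr.1.ne').deriv]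
    exact auxF_deriv_neg A B u v r0 r hA hB hu hv hr0 hr.1 hr.2
  have hmono : StrictMonoOn (auxF A B u v) (Ici r0) := by
    apply strictMonoOn_of_deriv_pos (convex_Ici r0)
      (fun r hr => (hcont r (lt_of_lt_of_le hr0pos hr)).continuousWithinAt)
    intro r hr
    rw [interior_Ici] at hr
    rw [(auxF_hasDerivAt A B u v r (hr0pos.trans hr).ne').deriv]
    exact auxF_deriv_pos A B u v r0 r hA hB hu hv hr0 hr0pos hr
  obtain ⟨r1, hr1pos, hr1lt, hFr1⟩ : ∃ r1, 0 < r1 ∧ r1 < r0 ∧ 1 < auxF A B u v r1 := by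
    have htpos : (0:ℝ) < (A⁻¹) ^ u⁻¹ := Real.rpow_pos_of_pos (by positivity) _
    set t : ℝ := (A⁻¹) ^ u⁻¹ with ht
    refine ⟨min (r0/2) (t/2), by positivity, lt_of_le_of_lt (min_le_left _ _) (by linarith), ?_⟩
    set r := min (r0/2) (t/2) with hrdef
    have hrpos : 0 < r := by positivity
    have hrt : r < t := lt_of_le_of_lt (min_le_right _ _) (by linarith)
    have h1 : t ^ u < r ^ u := Real.rpow_lt_rpow_of_neg hrpos hrt hu
    have h2 : t ^ u = A⁻¹ := by rw [ht, Real.rpow_inv_rpow (by positivity) hu.ne]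
    have h3 : 1 < A * r ^ u := by
      have h4 := mul_lt_mul_of_pos_left h1 hA
      rw [h2, mul_inv_cancel₀ hA.ne'] at h4
      exact h4
    have h5 : 0 < B * r ^ v := by
      have : (0:ℝ) < r ^ v := Real.rpow_pos_of_pos hrpos _
      positivity
    show 1 < A * r ^ u + B * r ^ v
    linarith
  obtain ⟨r2, hr2gt, hFr2⟩ : ∃ r2, r0 < r2 ∧ 1 < auxF A B u v r2 := by
    have htpos : (0:ℝ) < (B⁻¹) ^ v⁻¹ := Real.rpow_pos_of_pos (by positivity) _
    set t : ℝ := (B⁻¹) ^ v⁻¹ with ht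
    refine ⟨max (2*r0) (t+1), lt_of_lt_of_le (by linarith) (le_max_left _ _), ?_⟩
    set r := max (2*r0) (t+1) with hrdef
    have hrt : t < r := lt_of_lt_of_le (by linarith) (le_max_right _ _)
    have hrpos : 0 < r := htpos.trans hrt
    have h1 : t ^ v < r ^ v := Real.rpow_lt_rpow htpos.le hrt hv
    have h2 : t ^ v = B⁻¹ := by rw [ht, Real.rpow_inv_rpow (by positivity) hv.ne']
    have h3 : 1 < B * r ^ v := by
      have h4 := mul_lt_mul_of_pos_left h1 hB
      rw [h2, mul_inv_cancel₀ hB.ne'] at h4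
      exact h4
    have h5 : 0 < A * r ^ u := by
      have : (0:ℝ) < r ^ u := Real.rpow_pos_of_pos hrpos _
      positivity
    show 1 < A * r ^ u + B * r ^ v
    linarith
  have hcO1 : ContinuousOn (auxF A B u v) (Icc r1 r0) := fun r hr =>
    (hcont r (lt_of_lt_of_le hr1pos hr.1)).continuousWithinAt
  obtain ⟨R0, hR0mem, hR0⟩ := intermediate_value_Ioo' hr1lt.le hcO1 ⟨hFr0, hFr1⟩
  have hcO2 : ContinuousOn (auxF A B u v) (Icc r0 r2) := fun r hr =>
    (hcont r (lt_of_lt_of_le hr0pos hr.1)).continuousWithinAt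
  obtain ⟨R1, hR1mem, hR1⟩ := intermediate_value_Ioo hr2gt.le hcO2 ⟨hFr0, hFr2⟩
  have hR0pos : 0 < R0 := hr1pos.trans hR0mem.1
  have hR0lt : R0 < r0 := hR0mem.2
  have hR1gt : r0 < R1 := hR1mem.1
  refine ⟨R0, R1, hR0pos, hR0lt, hR1gt, hR0, hR1, ?_, ?_, ?_, ?_⟩
  · intro r hr hr1'
    rcases lt_trichotomy r r0 with h | h | h
    · left
      exact hanti.injOn ⟨hr, h.le⟩ ⟨hR0pos, hR0lt.le⟩ (by rw [hr1', hR0])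
    · exfalso; rw [h] at hr1'; linarith
    · right
      exact hmono.injOn (le_of_lt h) (le_of_lt hR1gt) (by rw [hr1', hR1])
  · intro r hrpos hrlt
    have := hanti ⟨hrpos, (hrlt.trans hR0lt).le⟩ ⟨hR0pos, hR0lt.le⟩ hrlt
    rw [hR0] at this
    exact this
  · intro r h0 h1'
    rcases le_or_gt r r0 with h | h
    · have := hanti ⟨hR0pos, hR0lt.le⟩ ⟨hR0pos.trans h0, h⟩ h0
      rw [hR0] at this
      exact this
    · have := hmono (le_of_lt h) (le_of_lt hR1gt) h1'
      rw [hR1] at this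
      exact this
  · intro r hr
    have := hmono (le_of_lt hR1gt) (le_of_lt (hR1gt.trans hr)) hr
    rw [hR1] at this
    exact this


set_option maxHeartbeats 1000000 in
/-- under (1.4), `w_a(r₀) > 0` and `w_a` has exactly two zeros
`0 < R₀ < r₀ < R₁ < ∞`, with the stated sign pattern. -/
theorem stmt3
    (N : ℕ) (s α q p : ℝ)
    (hs0 : 0 < s) (hs1 : s < 1) (hN : 2 * s < (N : ℝ))
    (hα0 : 0 < α) (hαN : α < (N : ℝ))
    (hq1 : ((N : ℝ) + α) / N < q) (hq2 : q < ((N : ℝ) + 2 * s + α) / N)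
    (hp1 : ((N : ℝ) + 2 * s + α) / N < p) (hp2 : p ≤ ((N : ℝ) + α) / ((N : ℝ) - 2 * s))
    (a Cq Cp : ℝ) (ha : 0 < a) (hCq : 0 < Cq) (hCp : 0 < Cp)
    (w : ℝ → ℝ)
    (hw : ∀ r : ℝ, w r = 1 - Cq / q * a ^ (q * (1 - gam N s α q)) * r ^ (2 * q * gam N s α q - 2)
      - Cp / p * a ^ (p * (1 - gam N s α p)) * r ^ (2 * p * gam N s α p - 2))
    (r0 : ℝ)
    (hr0 : r0 = ((2 - 2 * q * gam N s α q) * (Cq / q) * a ^ (q * (1 - gam N s α q)) /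
      ((2 * p * gam N s α p - 2) * (Cp / p) * a ^ (p * (1 - gam N s α p)))) ^
        (1 / (2 * (p * gam N s α p - q * gam N s α q))))
    (K E : ℝ)
    (hK : K = (p * gam N s α p - q * gam N s α q) / (1 - q * gam N s α q) *
      ((1 - q * gam N s α q) / (p * gam N s α p - 1)) ^
        ((p * gam N s α p - 1) / (p * gam N s α p - q * gam N s α q)) *
      (Cq / q) ^ ((p * gam N s α p - 1) / (p * gam N s α p - q * gam N s α q)) *
      (Cp / p) ^ ((1 - q * gam N s α q) / (p * gam N s α p - q * gam N s α q)))
    (hE : E = (q * (1 - gam N s α q) * (p * gam N s α p - 1) +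
      p * (1 - gam N s α p) * (1 - q * gam N s α q)) / (p * gam N s α p - q * gam N s α q))
    (h14 : K * a ^ E < 1) :
    0 < w r0 ∧
    ∃ R0 R1 : ℝ, 0 < R0 ∧ R0 < r0 ∧ r0 < R1 ∧ w R0 = 0 ∧ w R1 = 0 ∧
      (∀ r : ℝ, 0 < r → w r = 0 → r = R0 ∨ r = R1) ∧
      (∀ r ∈ Ioo (0 : ℝ) R0, w r < 0) ∧
      (∀ r ∈ Ioo R0 R1, 0 < w r) ∧
      (∀ r ∈ Ioi R1, w r < 0) := by
  have hN0 : (0:ℝ) < N := by linarith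
  have hs2 : (0:ℝ) < 2 * s := by linarith
  have hq0 : 0 < q := lt_trans (div_pos (by linarith) hN0) hq1
  have hp0 : 0 < p := lt_trans (div_pos (by linarith) hN0) hp1
  have hGqd : q * gam N s α q = ((N:ℝ) * q - N - α) / (2 * s) := by
    unfold gam; field_simp
  have hGpd : p * gam N s α p = ((N:ℝ) * p - N - α) / (2 * s) := by
    unfold gam; field_simp
  have hq1' : (N:ℝ) + α < q * N := (div_lt_iff₀ hN0).mp hq1
  have hq2' : q * N < (N:ℝ) + 2 * s + α := (lt_div_iff₀ hN0).mp hq2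
  have hp1' : (N:ℝ) + 2 * s + α < p * N := (div_lt_iff₀ hN0).mp hp1
  have hGq0 : 0 < q * gam N s α q := by
    rw [hGqd]; apply div_pos; nlinarith; linarith
  have hGq1 : q * gam N s α q < 1 := by
    rw [hGqd, div_lt_one hs2]; nlinarith
  have hGp1 : 1 < p * gam N s α p := by
    rw [hGpd, lt_div_iff₀ hs2]; nlinarith
  -- opaque abbreviations
  obtain ⟨Gq, hGq⟩ : ∃ x, q * gam N s α q = x := ⟨_, rfl⟩
  obtain ⟨Gp, hGp⟩ : ∃ x, p * gam N s α p = x := ⟨_, rfl⟩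
  obtain ⟨eq1, heq1⟩ : ∃ x, q * (1 - gam N s α q) = x := ⟨_, rfl⟩
  obtain ⟨ep1, hep1⟩ : ∃ x, p * (1 - gam N s α p) = x := ⟨_, rfl⟩
  rw [hGq] at hGq0 hGq1
  rw [hGp] at hGp1
  simp only [hGq, hGp, heq1, hep1] at hw hr0 hK hE
  have eu : 2 * q * gam N s α q - 2 = 2 * Gq - 2 := by rw [← hGq]; ring
  have ev : 2 * p * gam N s α p - 2 = 2 * Gp - 2 := by rw [← hGp]; ring
  have eu' : 2 - 2 * q * gam N s α q = -(2 * Gq - 2) := by rw [← hGq]; ring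
  simp only [eu, ev] at hw
  rw [eu', ev] at hr0
  obtain ⟨Aq, hAq⟩ : ∃ x, Cq / q * a ^ eq1 = x := ⟨_, rfl⟩
  obtain ⟨Bp, hBp⟩ : ∃ x, Cp / p * a ^ ep1 = x := ⟨_, rfl⟩
  simp only [hAq, hBp] at hw
  have hApos : 0 < Aq := by rw [← hAq]; positivity
  have hBpos : 0 < Bp := by rw [← hBp]; positivity
  obtain ⟨u, hu'⟩ : ∃ x, 2 * Gq - 2 = x := ⟨_, rfl⟩
  obtain ⟨v, hv'⟩ : ∃ x, 2 * Gp - 2 = x := ⟨_, rfl⟩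
  simp only [hu', hv'] at hw hr0
  have hu : u < 0 := by rw [← hu']; linarith
  have hv : 0 < v := by rw [← hv']; linarith
  have hvu : (0:ℝ) < v - u := by linarith
  have hGpGq : (0:ℝ) < Gp - Gq := by linarith
  have h1Gq : (0:ℝ) < 1 - Gq := by linarith
  have hGp1' : (0:ℝ) < Gp - 1 := by linarith
  have hw2 : ∀ r : ℝ, w r = 1 - auxF Aq Bp u v r := by
    intro r
    rw [hw r]
    simp only [auxF]
    ring
  have hρpos : 0 < (-u) * Aq / (v * Bp) :=
    div_pos (mul_pos (by linarith) hApos) (mul_pos hv hBpos)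
  have hr0' : r0 = ((-u) * Aq / (v * Bp)) ^ ((v - u)⁻¹) := by
    rw [hr0]
    congr 1
    · rw [← hAq, ← hBp]; ring
    · rw [one_div]
      congr 1
      rw [← hu', ← hv']
      ring
  have hr0pos : 0 < r0 := by rw [hr0']; exact Real.rpow_pos_of_pos hρpos _
  have hr0vu : r0 ^ (v - u) = (-u) * Aq / (v * Bp) := by
    rw [hr0']; exact Real.rpow_inv_rpow hρpos.le hvu.ne'
  obtain ⟨lam, hlam⟩ : ∃ x, (1 - Gq) / (Gp - Gq) = x := ⟨_, rfl⟩
  obtain ⟨mu, hmu⟩ : ∃ x, (Gp - 1) / (Gp - Gq) = x := ⟨_, rfl⟩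
  rw [hlam, hmu] at hK
  have hlm : lam + mu = 1 := by
    rw [← hlam, ← hmu, ← add_div, div_eq_one_iff_eq hGpGq.ne']
    ring
  have hval : auxF Aq Bp u v r0 = K * a ^ E := by
    have h1 : r0 ^ u = ((-u) * Aq / (v * Bp)) ^ ((v - u)⁻¹ * u) := by
      rw [hr0', ← Real.rpow_mul hρpos.le]
    have h2 : r0 ^ v = ((-u) * Aq / (v * Bp)) ^ ((v - u)⁻¹ * v) := by
      rw [hr0', ← Real.rpow_mul hρpos.le]
    have e1 : (v - u)⁻¹ * u = -lam := by
      rw [← hlam, ← hu', ← hv',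
        show 2 * Gp - 2 - (2 * Gq - 2) = 2 * (Gp - Gq) by ring]
      field_simp
      ring
    have e2 : (v - u)⁻¹ * v = mu := by
      rw [← hmu, ← hu', ← hv',
        show 2 * Gp - 2 - (2 * Gq - 2) = 2 * (Gp - Gq) by ring]
      field_simp
    have hρc : (-u) * Aq / (v * Bp) = ((1 - Gq) / (Gp - 1)) * (Aq / Bp) := by
      rw [← hu', ← hv',
        show -(2 * Gq - 2) = 2 * (1 - Gq) by ring,
        show 2 * Gp - 2 = 2 * (Gp - 1) by ring]
      field_simp
    have hc : 0 < (1 - Gq) / (Gp - 1) := div_pos h1Gq hGp1'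
    show Aq * r0 ^ u + Bp * r0 ^ v = K * a ^ E
    rw [h1, h2, e1, e2, hρc, stmt3_key Aq Bp _ lam mu hApos hBpos hc hlm, hK]
    have hAmu : Aq ^ mu = (Cq / q) ^ mu * a ^ (eq1 * mu) := by
      rw [← hAq, Real.mul_rpow (by positivity) (by positivity), ← Real.rpow_mul ha.le]
    have hBlam : Bp ^ lam = (Cp / p) ^ lam * a ^ (ep1 * lam) := by
      rw [← hBp, Real.mul_rpow (by positivity) (by positivity), ← Real.rpow_mul ha.le]
    have hEe : eq1 * mu + ep1 * lam = E := by
      rw [hE, ← hmu, ← hlam]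
      field_simp
    have hcc : 1 + 1 / ((1 - Gq) / (Gp - 1)) = (Gp - Gq) / (1 - Gq) := by
      rw [one_div_div]
      field_simp
      ring
    rw [hAmu, hBlam, ← hEe, Real.rpow_add ha, hcc]
    ring
  have hFr0val : auxF Aq Bp u v r0 < 1 := by rw [hval]; exact h14
  obtain ⟨R0, R1, h01, h02, h03, h04, h05, h06, h07, h08, h09⟩ :=
    auxMain Aq Bp u v r0 hApos hBpos hu hv hr0pos hr0vu hFr0val
  refine ⟨?_, R0, R1, h01, h02, h03, ?_, ?_, ?_, ?_, ?_, ?_⟩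
  · rw [hw2]; linarith
  · rw [hw2, h04]; ring
  · rw [hw2, h05]; ring
  · intro r hr hwr
    apply h06 r hr
    have h := hw2 r
    rw [hwr] at h
    linarith
  · intro r hr
    rw [hw2]
    have := h07 r hr.1 hr.2
    linarith
  · intro r hr
    rw [hw2]
    have := h08 r hr.1 hr.2
    linarith
  · intro r hr
    rw [hw2]
    have := h09 r hr
    linarith
end
end

section
/- (Lemma 2.5) Let 0 < a_2 ≤ a_1 and let r_1 > 0 be such that w_{a_1}(r_1) ≥ 0. Then w_{a_2}(r_2) ≥ 0 for every r_2 ∈ [√(a_2/a_1) · r_1, r_1]. -/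
open Filter Set Topology

noncomputable section

/-- Lemma 2.5: if `w_{a₁}(r₁) ≥ 0` then `w_{a₂}(r₂) ≥ 0` for all
`r₂ ∈ [√(a₂/a₁)·r₁, r₁]`, whenever `0 < a₂ ≤ a₁`. -/
theorem stmt5
    (N : ℕ) (s α q p : ℝ)
    (hs0 : 0 < s) (hs1 : s < 1) (hN : 2 * s < (N : ℝ))
    (hα0 : 0 < α) (hαN : α < (N : ℝ))
    (hq1 : ((N : ℝ) + α) / N < q) (hq2 : q < ((N : ℝ) + 2 * s + α) / N)
    (hp1 : ((N : ℝ) + 2 * s + α) / N < p) (hp2 : p ≤ ((N : ℝ) + α) / ((N : ℝ) - 2 * s))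
    (Cq Cp : ℝ) (hCq : 0 < Cq) (hCp : 0 < Cp)
    (W : ℝ → ℝ → ℝ)
    (hW : ∀ c r : ℝ, W c r = 1 - Cq / q * c ^ (q * (1 - gam N s α q)) * r ^ (2 * q * gam N s α q - 2)
      - Cp / p * c ^ (p * (1 - gam N s α p)) * r ^ (2 * p * gam N s α p - 2))
    (a1 a2 r1 : ℝ) (ha2 : 0 < a2) (h21 : a2 ≤ a1) (hr1 : 0 < r1)
    (hW1 : 0 ≤ W a1 r1) :
    ∀ r2 ∈ Icc (Real.sqrt (a2 / a1) * r1) r1, 0 ≤ W a2 r2 := by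
  intro r2 hr2
  obtain ⟨hr2l, hr2u⟩ := hr2
  have hN0 : (0 : ℝ) < N := lt_trans (by positivity) hN
  have ha1 : 0 < a1 := lt_of_lt_of_le ha2 h21
  have hq0 : 1 < q := lt_trans ((one_lt_div hN0).2 (by linarith)) hq1
  have hp0 : 1 < p := lt_trans ((one_lt_div hN0).2 (by linarith)) hp1
  have hr20 : 0 < r2 :=
    lt_of_lt_of_le (by positivity : (0:ℝ) < Real.sqrt (a2 / a1) * r1) hr2l
  -- numeric consequences of the exponent bounds
  have hq2' : q * N < N + 2 * s + α := (lt_div_iff₀ hN0).1 hq2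
  have hp1' : N + 2 * s + α < p * N := (div_lt_iff₀ hN0).1 hp1
  have h2sN : (0 : ℝ) < (N : ℝ) - 2 * s := by linarith
  have hp2' : p * ((N : ℝ) - 2 * s) ≤ N + α := (le_div_iff₀ h2sN).1 hp2
  have hγq1 : gam N s α q < 1 := by
    rw [gam, div_lt_one (by positivity)]
    nlinarith
  have hγp1 : gam N s α p ≤ 1 := by
    rw [gam, div_le_one (by positivity)]
    nlinarith
  have hEq : 0 < q * (1 - gam N s α q) := by
    have : 0 < 1 - gam N s α q := by linarith
    positivity
  have hEp : 0 ≤ p * (1 - gam N s α p) := by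
    have : 0 ≤ 1 - gam N s α p := by linarith
    positivity
  have hgp : 2 * p * gam N s α p = ((N : ℝ) * p - N - α) / s := by
    rw [gam]; field_simp
  have hFp : 0 ≤ 2 * p * gam N s α p - 2 := by
    rw [hgp, sub_nonneg, le_div_iff₀ hs0]
    nlinarith
  -- key inequality : a2 / r2² ≤ a1 / r1²
  have hsq : Real.sqrt (a2 / a1) ^ 2 = a2 / a1 := Real.sq_sqrt (by positivity)
  have hr2sq : a2 / a1 * r1 ^ 2 ≤ r2 ^ 2 := by
    have hsqle : (Real.sqrt (a2 / a1) * r1) * (Real.sqrt (a2 / a1) * r1) ≤ r2 * r2 :=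
      mul_le_mul hr2l hr2l (by positivity) hr20.le
    calc a2 / a1 * r1 ^ 2 = (Real.sqrt (a2 / a1) * r1) * (Real.sqrt (a2 / a1) * r1) := by
          conv_lhs => rw [← hsq]
          ring
      _ ≤ r2 * r2 := hsqle
      _ = r2 ^ 2 := by ring
  have hkey : a2 / r2 ^ (2 : ℝ) ≤ a1 / r1 ^ (2 : ℝ) := by
    have h2 : ∀ x : ℝ, 0 < x → x ^ (2 : ℝ) = x ^ 2 := by
      intro x hx
      rw [show (2:ℝ) = ((2:ℕ):ℝ) by norm_num, Real.rpow_natCast]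
    rw [h2 _ hr20, h2 _ hr1, div_le_div_iff₀ (by positivity) (by positivity)]
    have := mul_le_mul_of_nonneg_left hr2sq ha1.le
    calc a2 * r1 ^ 2 = a1 * (a2 / a1 * r1 ^ 2) := by field_simp
      _ ≤ a1 * r2 ^ 2 := this
  -- rewriting identity for the q-term
  have hid : ∀ x y E F : ℝ, 0 < x → 0 < y →
      x ^ E * y ^ (F - 2 * E) = (x / y ^ (2 : ℝ)) ^ E * y ^ F := by
    intro x y E F hx hy
    rw [Real.div_rpow hx.le (Real.rpow_nonneg hy.le 2), ← Real.rpow_mul hy.le,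
      Real.rpow_sub hy]
    ring
  set Eq := q * (1 - gam N s α q) with hEqdef
  have hFqid : 2 * q * gam N s α q - 2 = (2 * q - 2) - 2 * Eq := by
    rw [hEqdef]; ring
  -- q-term comparison
  have hqterm : a2 ^ Eq * r2 ^ (2 * q * gam N s α q - 2)
      ≤ a1 ^ Eq * r1 ^ (2 * q * gam N s α q - 2) := by
    rw [hFqid, hid _ _ _ _ ha2 hr20, hid _ _ _ _ ha1 hr1]
    have h1 : (a2 / r2 ^ (2:ℝ)) ^ Eq ≤ (a1 / r1 ^ (2:ℝ)) ^ Eq :=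
      Real.rpow_le_rpow (by positivity) hkey hEq.le
    have h2 : r2 ^ (2 * q - 2) ≤ r1 ^ (2 * q - 2) :=
      Real.rpow_le_rpow hr20.le hr2u (by linarith)
    exact mul_le_mul h1 h2 (by positivity) (by positivity)
  -- p-term comparison
  have hpterm : a2 ^ (p * (1 - gam N s α p)) * r2 ^ (2 * p * gam N s α p - 2)
      ≤ a1 ^ (p * (1 - gam N s α p)) * r1 ^ (2 * p * gam N s α p - 2) := by
    have h1 : a2 ^ (p * (1 - gam N s α p)) ≤ a1 ^ (p * (1 - gam N s α p)) :=
      Real.rpow_le_rpow ha2.le h21 hEp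
    have h2 : r2 ^ (2 * p * gam N s α p - 2) ≤ r1 ^ (2 * p * gam N s α p - 2) :=
      Real.rpow_le_rpow hr20.le hr2u hFp
    exact mul_le_mul h1 h2 (by positivity) (by positivity)
  have hCq' : 0 < Cq / q := by positivity
  have hCp' : 0 < Cp / p := by positivity
  have hq' := mul_le_mul_of_nonneg_left hqterm hCq'.le
  have hp' := mul_le_mul_of_nonneg_left hpterm hCp'.le
  rw [hW] at hW1 ⊢
  linarith [hq', hp']
end
end

section
/- Assume condition (1.4): 𝒦 a^E < 1, let 0 < R_0 < R_1 be the two zeros of w_a, and let τ : [0,∞) → [0,1] be any non-increasing C^∞ function with τ ≡ 1 on [0,R_0] and τ ≡ 0 on [R_1,∞). Define g_{a,T}(r) = (1/2)r² − (C_q/(2q)) a^{q(1−γ_q)} r^{2qγ_q} − τ(r)·(C_p/(2p)) a^{p(1−γ_p)} r^{2pγ_p}. Then g_{a,T}(r) = g_a(r) for all r ∈ [0,R_0], g_{a,T}(r) > 0 for all r > R_0, and inf_{r>0} g_{a,T}(r) > −∞. -/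
open Filter Set Topology

noncomputable section

private lemma exp_combo_lt (A B cc dd x0 x x1 : ℝ) (hA : 0 < A) (hB : 0 < B)
    (hc : cc ≠ 0) (hd : dd ≠ 0) (h0 : x0 < x) (h1 : x < x1)
    (e0 : A * Real.exp (x0 * cc) + B * Real.exp (x0 * dd) = 1)
    (e1 : A * Real.exp (x1 * cc) + B * Real.exp (x1 * dd) = 1) :
    A * Real.exp (x * cc) + B * Real.exp (x * dd) < 1 := by
  have hx10 : (0:ℝ) < x1 - x0 := by linarith
  set t : ℝ := (x1 - x) / (x1 - x0) with ht
  have ht0 : 0 < t := div_pos (by linarith) hx10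
  have ht1 : 0 < 1 - t := by
    have : t < 1 := (div_lt_one hx10).2 (by linarith)
    linarith
  have hxe : x = t * x0 + (1 - t) * x1 := by
    rw [ht]
    field_simp
    ring
  have key : ∀ e : ℝ, e ≠ 0 →
      Real.exp (x * e) < t * Real.exp (x0 * e) + (1 - t) * Real.exp (x1 * e) := by
    intro e he
    have hne : x0 * e ≠ x1 * e := by
      intro h
      have := mul_right_cancel₀ he h
      linarith
    have h2 := strictConvexOn_exp.2 (Set.mem_univ (x0 * e)) (Set.mem_univ (x1 * e)) hne ht0 ht1
      (by ring)
    have harg : x * e = t * (x0 * e) + (1 - t) * (x1 * e) := by rw [hxe]; ring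
    rw [harg]
    simpa [smul_eq_mul] using h2
  have hAc := mul_lt_mul_of_pos_left (key cc hc) hA
  have hBd := mul_lt_mul_of_pos_left (key dd hd) hB
  have e0t : t * (A * Real.exp (x0 * cc) + B * Real.exp (x0 * dd)) = t := by rw [e0]; ring
  have e1t : (1 - t) * (A * Real.exp (x1 * cc) + B * Real.exp (x1 * dd)) = 1 - t := by
    rw [e1]; ring
  nlinarith [hAc, hBd, e0t, e1t]

private lemma rpow_combo_lt (A B cc dd R0 R1 r : ℝ) (hA : 0 < A) (hB : 0 < B)
    (hc : cc ≠ 0) (hd : dd ≠ 0) (hR0 : 0 < R0) (h0 : R0 < r) (h1 : r < R1)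
    (e0 : A * R0 ^ cc + B * R0 ^ dd = 1) (e1 : A * R1 ^ cc + B * R1 ^ dd = 1) :
    A * r ^ cc + B * r ^ dd < 1 := by
  have hr : 0 < r := lt_trans hR0 h0
  have hR1 : 0 < R1 := lt_trans hr h1
  have hl0 : Real.log R0 < Real.log r := Real.log_lt_log hR0 h0
  have hl1 : Real.log r < Real.log R1 := Real.log_lt_log hr h1
  have E := exp_combo_lt A B cc dd (Real.log R0) (Real.log r) (Real.log R1) hA hB hc hd hl0 hl1
    (by rw [← Real.rpow_def_of_pos hR0, ← Real.rpow_def_of_pos hR0]; exact e0)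
    (by rw [← Real.rpow_def_of_pos hR1, ← Real.rpow_def_of_pos hR1]; exact e1)
  rw [Real.rpow_def_of_pos hr, Real.rpow_def_of_pos hr]
  exact E

set_option maxHeartbeats 1000000 in
/-- under (1.4), the truncated function `g_{a,T}` coincides with `g_a` on
`[0,R₀]`, is positive on `(R₀,∞)`, and is bounded from below on `(0,∞)`. -/
theorem stmt6
    (N : ℕ) (s α q p : ℝ)
    (hs0 : 0 < s) (hs1 : s < 1) (hN : 2 * s < (N : ℝ))
    (hα0 : 0 < α) (hαN : α < (N : ℝ))
    (hq1 : ((N : ℝ) + α) / N < q) (hq2 : q < ((N : ℝ) + 2 * s + α) / N)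
    (hp1 : ((N : ℝ) + 2 * s + α) / N < p) (hp2 : p ≤ ((N : ℝ) + α) / ((N : ℝ) - 2 * s))
    (a Cq Cp : ℝ) (ha : 0 < a) (hCq : 0 < Cq) (hCp : 0 < Cp)
    (w : ℝ → ℝ)
    (hw : ∀ r : ℝ, w r = 1 - Cq / q * a ^ (q * (1 - gam N s α q)) * r ^ (2 * q * gam N s α q - 2)
      - Cp / p * a ^ (p * (1 - gam N s α p)) * r ^ (2 * p * gam N s α p - 2))
    (K E : ℝ)
    (hK : K = (p * gam N s α p - q * gam N s α q) / (1 - q * gam N s α q) *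
      ((1 - q * gam N s α q) / (p * gam N s α p - 1)) ^
        ((p * gam N s α p - 1) / (p * gam N s α p - q * gam N s α q)) *
      (Cq / q) ^ ((p * gam N s α p - 1) / (p * gam N s α p - q * gam N s α q)) *
      (Cp / p) ^ ((1 - q * gam N s α q) / (p * gam N s α p - q * gam N s α q)))
    (hE : E = (q * (1 - gam N s α q) * (p * gam N s α p - 1) +
      p * (1 - gam N s α p) * (1 - q * gam N s α q)) / (p * gam N s α p - q * gam N s α q))
    (h14 : K * a ^ E < 1)
    (R0 R1 : ℝ) (hR0 : 0 < R0) (hR01 : R0 < R1) (hwR0 : w R0 = 0) (hwR1 : w R1 = 0)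
    (g : ℝ → ℝ) (hg : ∀ r : ℝ, g r = 1 / 2 * r ^ 2 * w r)
    (τ : ℝ → ℝ) (hτsm : ContDiff ℝ (⊤ : ℕ∞) τ) (hτanti : AntitoneOn τ (Ici 0))
    (hτ01 : ∀ r : ℝ, 0 ≤ r → τ r ∈ Icc (0 : ℝ) 1)
    (hτone : ∀ r ∈ Icc (0 : ℝ) R0, τ r = 1) (hτzero : ∀ r : ℝ, R1 ≤ r → τ r = 0)
    (gT : ℝ → ℝ)
    (hgT : ∀ r : ℝ, gT r = 1 / 2 * r ^ 2
      - Cq / (2 * q) * a ^ (q * (1 - gam N s α q)) * r ^ (2 * q * gam N s α q)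
      - τ r * (Cp / (2 * p) * a ^ (p * (1 - gam N s α p)) * r ^ (2 * p * gam N s α p))) :
    (∀ r ∈ Icc (0 : ℝ) R0, gT r = g r) ∧
    (∀ r : ℝ, R0 < r → 0 < gT r) ∧
    BddBelow (gT '' Ioi 0) := by
  clear hK hE h14 hτsm hτanti hp2 hs1
  have hN0 : (0:ℝ) < N := by linarith
  have hq0 : 0 < q := lt_trans (div_pos (by positivity) hN0) hq1
  have hp0 : 0 < p := lt_trans (div_pos (by positivity) hN0) hp1
  have hq1' : (N:ℝ) + α < N * q := by
    have := (div_lt_iff₀ hN0).1 hq1; linarith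
  have hq2' : (N:ℝ) * q < N + 2 * s + α := by
    have := (lt_div_iff₀ hN0).1 hq2; linarith
  have hp1' : (N:ℝ) + 2 * s + α < N * p := by
    have := (div_lt_iff₀ hN0).1 hp1; linarith
  have hqe : q * gam N s α q = ((N:ℝ) * q - N - α) / (2 * s) := by
    unfold gam; field_simp
  have hpe : p * gam N s α p = ((N:ℝ) * p - N - α) / (2 * s) := by
    unfold gam; field_simp
  have hqγ0 : 0 < q * gam N s α q := by
    rw [hqe]; apply div_pos (by linarith) (by linarith)
  have hqγ1 : q * gam N s α q < 1 := by
    rw [hqe, div_lt_one (by linarith)]; linarith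
  have hpγ1 : 1 < p * gam N s α p := by
    rw [hpe, lt_div_iff₀ (by linarith)]; linarith
  set A := Cq / q * a ^ (q * (1 - gam N s α q)) with hAdef
  set B := Cp / p * a ^ (p * (1 - gam N s α p)) with hBdef
  have hA : 0 < A := mul_pos (div_pos hCq hq0) (Real.rpow_pos_of_pos ha _)
  have hB : 0 < B := mul_pos (div_pos hCp hp0) (Real.rpow_pos_of_pos ha _)
  set c := 2 * q * gam N s α q - 2 with hcdef
  set d := 2 * p * gam N s α p - 2 with hddef
  have hc0 : c < 0 := by rw [hcdef]; linarith
  have hd0 : 0 < d := by rw [hddef]; linarith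
  have he2q : 0 < 2 * q * gam N s α q := by linarith
  have he2p : 0 < 2 * p * gam N s α p := by linarith
  -- power decomposition for positive r
  have hdecq : ∀ r : ℝ, 0 < r → r ^ (2 * q * gam N s α q) = r ^ 2 * r ^ c := by
    intro r hr
    rw [show (r:ℝ) ^ 2 = r ^ ((2:ℕ):ℝ) by rw [Real.rpow_natCast], ← Real.rpow_add hr]
    norm_num [hcdef]
  have hdecp : ∀ r : ℝ, 0 < r → r ^ (2 * p * gam N s α p) = r ^ 2 * r ^ d := by
    intro r hr
    rw [show (r:ℝ) ^ 2 = r ^ ((2:ℕ):ℝ) by rw [Real.rpow_natCast], ← Real.rpow_add hr]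
    norm_num [hddef]
  -- master formulas
  have hgT2 : ∀ r : ℝ, 0 < r → gT r =
      1 / 2 * r ^ 2 * (1 - A * r ^ c - B * r ^ d) + (1 - τ r) * (B / 2 * (r ^ 2 * r ^ d)) := by
    intro r hr
    rw [hgT, hdecq r hr, hdecp r hr, hAdef, hBdef]
    ring
  have hgT3 : ∀ r : ℝ, gT r = 1 / 2 * r ^ 2 - A / 2 * r ^ (2 * q * gam N s α q)
      - τ r * (B / 2 * r ^ (2 * p * gam N s α p)) := by
    intro r
    rw [hgT, hAdef, hBdef]
    ring
  have e0 : A * R0 ^ c + B * R0 ^ d = 1 := by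
    have h := hw R0; rw [hwR0] at h; linarith
  have e1 : A * R1 ^ c + B * R1 ^ d = 1 := by
    have h := hw R1; rw [hwR1] at h; linarith
  have hR1pos : 0 < R1 := lt_trans hR0 hR01
  -- Part 2 as a standalone fact
  have part2 : ∀ r : ℝ, R0 < r → 0 < gT r := by
    intro r hr
    have hrpos : 0 < r := lt_trans hR0 hr
    rcases lt_or_ge r R1 with h | h
    · have hfr : A * r ^ c + B * r ^ d < 1 :=
        rpow_combo_lt A B c d R0 R1 r hA hB (ne_of_lt hc0) (ne_of_gt hd0) hR0 hr h e0 e1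
      have hτr := hτ01 r hrpos.le
      have t1 : 0 < 1 / 2 * r ^ 2 * (1 - A * r ^ c - B * r ^ d) := by
        apply mul_pos (by positivity) (by linarith)
      have t2 : 0 ≤ (1 - τ r) * (B / 2 * (r ^ 2 * r ^ d)) := by
        apply mul_nonneg (by linarith [hτr.2])
        have := Real.rpow_pos_of_pos hrpos d
        positivity
      rw [hgT2 r hrpos]; linarith
    · have hτ0 := hτzero r h
      have hanti : r ^ c ≤ R1 ^ c := Real.rpow_le_rpow_of_nonpos hR1pos h (le_of_lt hc0)
      have hBR1 : 0 < B * R1 ^ d := mul_pos hB (Real.rpow_pos_of_pos hR1pos d)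
      have hAr : A * r ^ c < 1 := by
        have : A * r ^ c ≤ A * R1 ^ c := mul_le_mul_of_nonneg_left hanti hA.le
        linarith
      have key : 0 < 1 / 2 * r ^ 2 * (1 - A * r ^ c) :=
        mul_pos (by positivity) (by linarith)
      rw [hgT2 r hrpos, hτ0]
      have hrd : 0 < r ^ d := Real.rpow_pos_of_pos hrpos d
      linarith [key]
  refine ⟨?_, part2, ?_⟩
  · -- Part 1
    intro r hr
    have hτ := hτone r hr
    rcases eq_or_lt_of_le hr.1 with h | h
    · subst h
      have z1 : (0:ℝ) ^ (2 * q * gam N s α q) = 0 := Real.zero_rpow (ne_of_gt he2q)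
      have z2 : (0:ℝ) ^ (2 * p * gam N s α p) = 0 := Real.zero_rpow (ne_of_gt he2p)
      have z3 : (0:ℝ) ^ c = 0 := Real.zero_rpow (ne_of_lt hc0)
      have z4 : (0:ℝ) ^ d = 0 := Real.zero_rpow (ne_of_gt hd0)
      rw [hgT, hg, hw, hτ, z1, z2, z3, z4]
      ring
    · rw [hgT2 r h, hg, hw, hτ]
      ring
  · -- Part 3: bounded below
    refine ⟨-(A / 2 * R1 ^ (2 * q * gam N s α q)) - B / 2 * R1 ^ (2 * p * gam N s α p), ?_⟩
    rintro x ⟨r, hr, rfl⟩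
    have hrpos : (0:ℝ) < r := hr
    rcases le_or_gt r R1 with h | h
    · have hm1 : r ^ (2 * q * gam N s α q) ≤ R1 ^ (2 * q * gam N s α q) :=
        Real.rpow_le_rpow hrpos.le h (le_of_lt he2q)
      have hm2 : r ^ (2 * p * gam N s α p) ≤ R1 ^ (2 * p * gam N s α p) :=
        Real.rpow_le_rpow hrpos.le h (le_of_lt he2p)
      have hτr := hτ01 r hrpos.le
      have hrq : 0 ≤ r ^ (2 * p * gam N s α p) := (Real.rpow_pos_of_pos hrpos _).le
      have ht : τ r * (B / 2 * r ^ (2 * p * gam N s α p)) ≤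
          B / 2 * R1 ^ (2 * p * gam N s α p) := by
        have h1 : τ r * (B / 2 * r ^ (2 * p * gam N s α p)) ≤
            1 * (B / 2 * r ^ (2 * p * gam N s α p)) := by
          apply mul_le_mul_of_nonneg_right hτr.2
          positivity
        have h2 : B / 2 * r ^ (2 * p * gam N s α p) ≤ B / 2 * R1 ^ (2 * p * gam N s α p) := by
          apply mul_le_mul_of_nonneg_left hm2 (by positivity)
        linarith
      rw [hgT3 r]
      linarith [sq_nonneg r, mul_le_mul_of_nonneg_left hm1 (le_of_lt (half_pos hA))]
    · have := part2 r (lt_trans hR01 h)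
      have n1 : 0 ≤ A / 2 * R1 ^ (2 * q * gam N s α q) := by
        have := Real.rpow_pos_of_pos hR1pos (2 * q * gam N s α q); positivity
      have n2 : 0 ≤ B / 2 * R1 ^ (2 * p * gam N s α p) := by
        have := Real.rpow_pos_of_pos hR1pos (2 * p * gam N s α p); positivity
      linarith
end
end
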